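/- For every real number t < 0, the function a_t : ℝ → ℝ (the unique continuous function with a_t ∘ x_t = y_t) is infinitely differentiable (C^∞) on all of ℝ. -/

import Mathlib

/-- The model function `x_t(u) = (15/8)·∫₀ᵘ (s² − t)² ds`. -/
noncomputable def xfun (t u : ℝ) : ℝ := (15/8) * ∫ s in (0:ℝ)..u, (s^2 - t)^2

/-- The model function `y_t(u) = −(1/2)(u³ − 3tu)`. -/
noncomputable def yfun (t u : ℝ) : ℝ := -(1/2) * (u^3 - 3*t*u)

/-! For `t < 0` the derivative `(15/8)(u² − t)²` of `x_t` is bounded below by `(15/8)t² > 0`,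
so `x_t` is a smooth diffeomorphism of `ℝ` and `a_t = y_t ∘ x_t⁻¹` is smooth by the inverse
function theorem. -/

open Function
open scoped ContDiff

theorem surjective_of_le_deriv {f : ℝ → ℝ} (hf : Differentiable ℝ f) {C : ℝ} (hC : 0 < C)
    (hf' : ∀ x, C ≤ deriv f x) : Surjective f := by
  intro v
  set b := |v - f 0| / C
  have hb : 0 ≤ b := by positivity
  have hCb : C * b = |v - f 0| := mul_div_cancel₀ _ hC.ne'
  have h_right := mul_sub_le_image_sub_of_le_deriv hf hf' hb
  have h_left := mul_sub_le_image_sub_of_le_deriv hf hf' (neg_nonpos.2 hb)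
  rw [sub_zero] at h_right
  rw [zero_sub, neg_neg] at h_left
  refine intermediate_value_univ (-b) b hf.continuous ⟨?_, ?_⟩
  · linarith [neg_abs_le (v - f 0)]
  · linarith [le_abs_self (v - f 0)]

theorem contDiff_of_comp_eq_of_deriv_pos {f g h : ℝ → ℝ} {n : WithTop ℕ∞} (hf : ContDiff ℝ n f)
    (hf' : ∀ x, 0 < deriv f x) (hsurj : Surjective f) (hh : ContDiff ℝ n h)
    (hgf : ∀ x, g (f x) = h x) : ContDiff ℝ n g := by
  let e := (StrictMono.orderIsoOfSurjective f (strictMono_of_deriv_pos hf') hsurj).toHomeomorph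
  have he_symm : ContDiff ℝ n e.symm := e.contDiff_symm_deriv (fun x => (hf' x).ne')
    (fun x => (differentiableAt_of_deriv_ne_zero (hf' x).ne').hasDerivAt) hf
  have hg : g = h ∘ e.symm := funext fun y => by
    rw [comp_apply, ← hgf]
    exact congrArg g (e.apply_symm_apply y).symm
  exact hg ▸ hh.comp he_symm

theorem hasDerivAt_xfun (t u : ℝ) : HasDerivAt (xfun t) ((15/8) * (u^2 - t)^2) u :=
  ((show Continuous fun s : ℝ => (s^2 - t)^2 by fun_prop).integral_hasStrictDerivAt 0 u
    ).hasDerivAt.const_mul _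

theorem deriv_xfun (t : ℝ) : deriv (xfun t) = fun u => (15/8) * (u^2 - t)^2 :=
  funext fun u => (hasDerivAt_xfun t u).deriv

theorem differentiable_xfun (t : ℝ) : Differentiable ℝ (xfun t) :=
  fun u => (hasDerivAt_xfun t u).differentiableAt

theorem contDiff_xfun (t : ℝ) {n : WithTop ℕ∞} (hn : n ≤ ∞) : ContDiff ℝ n (xfun t) :=
  (contDiff_infty_iff_deriv.2 ⟨differentiable_xfun t, by rw [deriv_xfun]; fun_prop⟩).of_le hn

theorem le_deriv_xfun {t : ℝ} (ht : t < 0) (u : ℝ) : (15/8) * t^2 ≤ deriv (xfun t) u := by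
  rw [deriv_xfun]
  nlinarith [sq_nonneg u, mul_nonneg (sq_nonneg u) (sq_nonneg u)]

theorem contDiff_yfun (t : ℝ) {n : WithTop ℕ∞} : ContDiff ℝ n (yfun t) := by
  unfold yfun
  fun_prop

theorem graph_function_smooth_of_neg (t : ℝ) (ht : t < 0) (a : ℝ → ℝ)
    (hax : ∀ u : ℝ, a (xfun t u) = yfun t u) :
    ContDiff ℝ (⊤ : ℕ∞) a := by
  have hC : 0 < (15/8) * t^2 := by have := ht.ne; positivity
  exact contDiff_of_comp_eq_of_deriv_pos (contDiff_xfun t le_rfl)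
    (fun u => hC.trans_le (le_deriv_xfun ht u))
    (surjective_of_le_deriv (differentiable_xfun t) hC (le_deriv_xfun ht)) (contDiff_yfun t) hax
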